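/- arXiv:0810.3629 — 4 statements merged into one kernel-verified Lean document; each statement's English description precedes it below -/
import Mathlib

section
/- The self-adjoint operator Y = I − T T* satisfies Y e_n = q^{2n} e_n for every n ∈ ℕ, Y is compact, and the spectrum of Y is exactly the set {q^{2n} : n ∈ ℕ} ∪ {0}. -/
noncomputable section

open ContinuousLinearMap

def fockBasis (n : ℕ) : lp (fun _ : ℕ => ℂ) 2 := lp.single 2 n 1

/-! `Y = 1 - T T*` is diagonal in the standard basis, `Y e_n = q^{2n} e_n`, because `T` is a
weighted shift whose adjoint shifts back with the conjugate weights. The eigenvalues are summable,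
so `Y` is a norm-convergent sum of rank-one operators and hence compact. By the Fredholm
alternative the nonzero spectrum of `Y` consists of its eigenvalues, which for a diagonal operator
are exactly the diagonal entries; finally `0` lies in the (closed) spectrum as the limit of
`q^{2n}`. -/

open scoped InnerProductSpace ComplexConjugate lp

namespace HilbertBasis

variable {ι 𝕜 E : Type*} [RCLike 𝕜] [NormedAddCommGroup E] [InnerProductSpace 𝕜 E]
  (b : HilbertBasis ι 𝕜 E)

theorem ext_inner_left {x y : E} (h : ∀ i, ⟪b i, x⟫_𝕜 = ⟪b i, y⟫_𝕜) : x = y :=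
  b.repr.injective <| lp.ext <| funext fun i => by simp only [b.repr_apply_apply, h]

theorem inner_eq_ite [DecidableEq ι] (i j : ι) :
    ⟪b i, b j⟫_𝕜 = if i = j then 1 else 0 :=
  orthonormal_iff_ite.mp b.orthonormal i j

section Diagonal

variable {b} {A : E →L[𝕜] E} {d : ι → 𝕜}

theorem inner_apply_of_apply_eq_smul (hA : ∀ i, A (b i) = d i • b i) (i : ι) (x : E) :
    ⟪b i, A x⟫_𝕜 = d i * ⟪b i, x⟫_𝕜 := by
  classical
  have hx : HasSum (fun j => ⟪b i, A (b.repr x j • b j)⟫_𝕜) ⟪b i, A x⟫_𝕜 :=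
    ((innerSL 𝕜 (b i)).comp A).hasSum (b.hasSum_repr x)
  refine hx.unique ?_
  simp only [map_smul, hA, inner_smul_right, inner_eq_ite, b.repr_apply_apply]
  convert hasSum_ite_eq i (d i * ⟪b i, x⟫_𝕜) using 2 with j
  rcases eq_or_ne j i with rfl | h
  · simp [mul_comm]
  · simp [h, h.symm]

theorem hasEigenvalue_iff_of_apply_eq_smul (hA : ∀ i, A (b i) = d i • b i) (μ : 𝕜) :
    Module.End.HasEigenvalue (A : Module.End 𝕜 E) μ ↔ μ ∈ Set.range d := by
  constructor
  · intro hμ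
    obtain ⟨x, hx⟩ := hμ.exists_hasEigenvector
    obtain ⟨i, hi⟩ : ∃ i, ⟪b i, x⟫_𝕜 ≠ 0 := by
      by_contra! h
      exact hx.2 (b.ext_inner_left fun i => by simp [h i])
    refine ⟨i, mul_right_cancel₀ hi ?_⟩
    rw [← inner_apply_of_apply_eq_smul hA, ← inner_smul_right]
    exact congrArg _ hx.apply_eq_smul
  · rintro ⟨i, rfl⟩
    exact Module.End.hasEigenvalue_of_hasEigenvector
      ⟨Module.End.mem_eigenspace_iff.mpr (hA i), b.orthonormal.ne_zero i⟩

variable [CompleteSpace E]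

theorem isCompactOperator_of_apply_eq_smul (hA : ∀ i, A (b i) = d i • b i)
    (hd : Summable fun i => ‖d i‖) : IsCompactOperator A := by
  classical
  set P : ι → E →L[𝕜] E := fun i => (innerSL 𝕜 (b i)).smulRight (b i)
  have hP_norm : ∀ i, ‖P i‖ = 1 := fun i => by
    simp [P, norm_smulRight_apply, b.orthonormal.1 i]
  have hP_compact : ∀ i, IsCompactOperator (P i) := fun i =>
    (isCompactOperator_of_locallyCompactSpace_rng
      (smulRight (1 : 𝕜 →L[𝕜] 𝕜) (b i))).comp_clm (innerSL 𝕜 (b i))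
  have hR : Summable fun i => d i • P i :=
    hd.of_norm_bounded fun i => (norm_smul_le (d i) (P i)).trans_eq (by rw [hP_norm, mul_one])
  have hA_eq : A = ∑' i, d i • P i := by
    refine ContinuousLinearMap.ext_on
      (Submodule.dense_iff_topologicalClosure_eq_top.mpr b.dense_span) ?_
    rintro _ ⟨k, rfl⟩
    have hk := (hR.hasSum.mapL (ContinuousLinearMap.apply 𝕜 E (b k))).tsum_eq
    simp only [apply_apply] at hk
    rw [hA, ← hk, tsum_eq_single k fun i hi => by simp [P, inner_eq_ite, hi]]
    simp [P, b.orthonormal.1 k]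
  rw [hA_eq]
  refine isCompactOperator_of_tendsto hR.hasSum (Filter.Eventually.of_forall fun s => ?_)
  exact Submodule.sum_mem (compactOperator (RingHom.id 𝕜) E E) fun i _ =>
    (hP_compact i).smul (d i)

theorem spectrum_eq_of_apply_eq_smul [Infinite ι] (hA : ∀ i, A (b i) = d i • b i)
    (hd : Summable fun i => ‖d i‖) : spectrum 𝕜 A = insert 0 (Set.range d) := by
  have hA_compact := isCompactOperator_of_apply_eq_smul hA hd
  have hd_spectrum : ∀ i, d i ∈ spectrum 𝕜 A := fun i => by
    rw [ContinuousLinearMap.spectrum_eq]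
    exact ((hasEigenvalue_iff_of_apply_eq_smul hA _).mpr ⟨i, rfl⟩).mem_spectrum
  ext μ
  rcases eq_or_ne μ 0 with rfl | hμ
  · simp only [Set.mem_insert_iff, true_or, iff_true]
    exact (spectrum.isClosed A).mem_of_tendsto hd.of_norm.tendsto_cofinite_zero
      (Filter.Eventually.of_forall hd_spectrum)
  · rw [← hA_compact.hasEigenvalue_iff_mem_spectrum hμ, hasEigenvalue_iff_of_apply_eq_smul hA,
      Set.mem_insert_iff, or_iff_right hμ]

end Diagonal

section WeightedShift

variable [CompleteSpace E] (b : HilbertBasis ℕ 𝕜 E) {T : E →L[𝕜] E} {w : ℕ → 𝕜}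

theorem adjoint_apply_zero_of_shift (hT : ∀ n, T (b n) = w n • b (n + 1)) :
    adjoint T (b 0) = 0 :=
  b.ext_inner_left fun k => by
    simp [adjoint_inner_right, hT, inner_smul_left, inner_eq_ite]

theorem adjoint_apply_succ_of_shift (hT : ∀ n, T (b n) = w n • b (n + 1))
    (n : ℕ) : adjoint T (b (n + 1)) = conj (w n) • b n :=
  b.ext_inner_left fun k => by
    rcases eq_or_ne k n with rfl | hk
    · simp [adjoint_inner_right, hT, inner_smul_left, inner_smul_right, b.orthonormal.1]
    · simp [adjoint_inner_right, hT, inner_smul_left, inner_smul_right, inner_eq_ite, hk]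

end WeightedShift

end HilbertBasis

def fockHilbertBasis : HilbertBasis ℕ ℂ ℓ²(ℕ, ℂ) :=
  HilbertBasis.ofRepr (LinearIsometryEquiv.refl ℂ ℓ²(ℕ, ℂ))

theorem coe_fockHilbertBasis : ⇑fockHilbertBasis = fockBasis := by
  classical
  funext n
  exact (fockHilbertBasis.repr_symm_single n).symm

theorem one_sub_comp_adjoint_apply_fockBasis {q : ℝ} (hq0 : 0 < q) (hq1 : q < 1)
    {T : ℓ²(ℕ, ℂ) →L[ℂ] ℓ²(ℕ, ℂ)}
    (hT : ∀ n : ℕ, T (fockBasis n) =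
      (Real.sqrt (1 - q ^ (2 * (n + 1))) : ℂ) • fockBasis (n + 1))
    (n : ℕ) : (1 - T ∘L adjoint T) (fockBasis n) = ((q : ℂ) ^ (2 * n)) • fockBasis n := by
  rw [← coe_fockHilbertBasis] at hT ⊢
  cases n with
  | zero => simp [fockHilbertBasis.adjoint_apply_zero_of_shift hT]
  | succ n =>
    have hw : (0 : ℝ) ≤ 1 - q ^ (2 * (n + 1)) := sub_nonneg.mpr (pow_le_one₀ hq0.le hq1.le)
    have hsq : conj (Real.sqrt (1 - q ^ (2 * (n + 1))) : ℂ) * Real.sqrt (1 - q ^ (2 * (n + 1)))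
        = 1 - (q : ℂ) ^ (2 * (n + 1)) := by
      rw [Complex.conj_ofReal, ← Complex.ofReal_mul, Real.mul_self_sqrt hw]
      push_cast; ring
    rw [sub_apply, comp_apply, fockHilbertBasis.adjoint_apply_succ_of_shift hT, map_smul, hT,
      smul_smul, hsq, one_apply_eq_self, sub_smul, one_smul, sub_sub_cancel]

theorem fock_Y_spectrum (q : ℝ) (hq0 : 0 < q) (hq1 : q < 1)
    (T : lp (fun _ : ℕ => ℂ) 2 →L[ℂ] lp (fun _ : ℕ => ℂ) 2)
    (hT : ∀ n : ℕ, T (fockBasis n) =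
      (Real.sqrt (1 - q ^ (2 * (n + 1))) : ℂ) • fockBasis (n + 1))
    (Y : lp (fun _ : ℕ => ℂ) 2 →L[ℂ] lp (fun _ : ℕ => ℂ) 2)
    (hY : Y = 1 - T ∘L ContinuousLinearMap.adjoint T) :
    (∀ n : ℕ, Y (fockBasis n) = ((q : ℂ) ^ (2 * n)) • fockBasis n) ∧
    IsCompactOperator (⇑Y) ∧
    spectrum ℂ Y = insert (0 : ℂ) (Set.range fun n : ℕ => ((q : ℂ) ^ (2 * n))) := by
  subst hY
  have hdiag := one_sub_comp_adjoint_apply_fockBasis hq0 hq1 hT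
  have hsum : Summable fun n : ℕ => ‖(q : ℂ) ^ (2 * n)‖ := by
    simp only [norm_pow, Complex.norm_real, Real.norm_of_nonneg hq0.le, pow_mul]
    exact summable_geometric_of_lt_one (by positivity) (by nlinarith)
  refine ⟨hdiag, ?_⟩
  rw [← coe_fockHilbertBasis] at hdiag
  exact ⟨HilbertBasis.isCompactOperator_of_apply_eq_smul hdiag hsum,
    HilbertBasis.spectrum_eq_of_apply_eq_smul hdiag hsum⟩
end
end

section
/- The Fock representation of the quantum disc algebra is faithful: the unique unital ℂ-algebra homomorphism from Pol(ℂ)_q to the algebra of bounded operators on ℓ²(ℕ, ℂ) sending z to T and w to T* (which exists because T*T = q² T T* + (1 − q²)·I) is injective. -/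
noncomputable section

/-- The defining relation of the quantum disc algebra: `w z = q² z w + (1 − q²)·1`,
where `true` encodes the generator `z` and `false` the generator `w`. -/
inductive DiscRel (q : ℝ) : FreeAlgebra ℂ Bool → FreeAlgebra ℂ Bool → Prop
  | rel : DiscRel q (FreeAlgebra.ι ℂ false * FreeAlgebra.ι ℂ true)
      (((q : ℂ) ^ 2) • (FreeAlgebra.ι ℂ true * FreeAlgebra.ι ℂ false) +
        ((1 : ℂ) - (q : ℂ) ^ 2) • (1 : FreeAlgebra ℂ Bool))

/-- The quantum disc algebra `Pol(ℂ)_q`. -/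
abbrev PolDisc (q : ℝ) := RingQuot (DiscRel q)

/-- The generator `z` of the quantum disc algebra. -/
def zGen (q : ℝ) : PolDisc q := RingQuot.mkAlgHom ℂ (DiscRel q) (FreeAlgebra.ι ℂ true)

/-- The generator `w = z*` of the quantum disc algebra. -/
def wGen (q : ℝ) : PolDisc q := RingQuot.mkAlgHom ℂ (DiscRel q) (FreeAlgebra.ι ℂ false)

/-!
Using `w z = q² z w + (1 − q²)` to move every `w` to the right, the ordered monomials
`z ^ k * w ^ l` span `Pol(ℂ)_q`, so it suffices that their images `T ^ k * T* ^ l` are linearly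
independent. This holds for any weighted shift `T e_n = c_n e_(n+1)` with nonzero weights:
`T* ^ l` kills `e_n` for `n < l` and sends `e_l` to a nonzero multiple of `e_0`, so testing a
vanishing combination on `e_l` against `e_k` isolates the coefficient of `(k, l)` once those with
smaller `l` are known to vanish.
-/

open scoped ComplexConjugate InnerProductSpace lp
open Finset
open ContinuousLinearMap (adjoint adjoint_inner_right)

section OrderedMonomials

variable {R A : Type*} [CommSemiring R] [Semiring A] [Algebra R A]

def orderedMonomial (z w : A) (p : ℕ × ℕ) : A := z ^ p.1 * w ^ p.2

theorem mul_mem_span_of_mul_mem {s : Set A} {a : A} (h : ∀ x ∈ s, a * x ∈ Submodule.span R s)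
    {y : A} (hy : y ∈ Submodule.span R s) : a * y ∈ Submodule.span R s :=
  (Submodule.span_le (p := (Submodule.span R s).comap (LinearMap.mulLeft R a)) |>.mpr h) hy

variable {z w : A}

theorem mul_orderedMonomial_left (k l : ℕ) :
    z * orderedMonomial z w (k, l) = orderedMonomial z w (k + 1, l) := by
  simp only [orderedMonomial, pow_succ', mul_assoc]

theorem orderedMonomial_mem_span (p : ℕ × ℕ) :
    orderedMonomial z w p ∈ Submodule.span R (Set.range (orderedMonomial z w)) :=
  Submodule.subset_span ⟨p, rfl⟩

theorem left_mul_mem_span_orderedMonomial {y : A}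
    (hy : y ∈ Submodule.span R (Set.range (orderedMonomial z w))) :
    z * y ∈ Submodule.span R (Set.range (orderedMonomial z w)) := by
  refine mul_mem_span_of_mul_mem ?_ hy
  rintro _ ⟨⟨k, l⟩, rfl⟩
  rw [mul_orderedMonomial_left]
  exact orderedMonomial_mem_span _

variable {a b : R} (hrel : w * z = a • (z * w) + b • 1)
include hrel

theorem right_mul_orderedMonomial_mem_span (k l : ℕ) :
    w * orderedMonomial z w (k, l) ∈ Submodule.span R (Set.range (orderedMonomial z w)) := by
  induction k with
  | zero =>
    simpa [orderedMonomial, pow_succ'] using orderedMonomial_mem_span (R := R) (z := z) (0, l + 1)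
  | succ k ih =>
    rw [← mul_orderedMonomial_left, ← mul_assoc, hrel, add_mul, smul_mul_assoc, smul_mul_assoc,
      one_mul, mul_assoc]
    exact add_mem (Submodule.smul_mem _ _ (left_mul_mem_span_orderedMonomial ih))
      (Submodule.smul_mem _ _ (orderedMonomial_mem_span _))

theorem adjoin_le_span_orderedMonomial :
    Subalgebra.toSubmodule (Algebra.adjoin R {z, w}) ≤
      Submodule.span R (Set.range (orderedMonomial z w)) := by
  intro x hx
  suffices ∀ y ∈ Submodule.span R (Set.range (orderedMonomial z w)),
      x * y ∈ Submodule.span R (Set.range (orderedMonomial z w)) by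
    simpa using this 1 (by simpa [orderedMonomial] using orderedMonomial_mem_span (R := R) (0, 0))
  induction hx using Algebra.adjoin_induction with
  | mem x hx =>
    rcases hx with rfl | rfl
    · exact fun y hy => left_mul_mem_span_orderedMonomial hy
    · refine fun y hy => mul_mem_span_of_mul_mem ?_ hy
      rintro _ ⟨⟨k, l⟩, rfl⟩
      exact right_mul_orderedMonomial_mem_span hrel k l
  | algebraMap r =>
    exact fun y hy => by simpa [Algebra.algebraMap_eq_smul_one] using Submodule.smul_mem _ r hy
  | add x x' _ _ hx hx' => exact fun y hy => by simpa [add_mul] using add_mem (hx y hy) (hx' y hy)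
  | mul x x' _ _ hx hx' => exact fun y hy => by simpa [mul_assoc] using hx _ (hx' y hy)

end OrderedMonomials

theorem wGen_mul_zGen (q : ℝ) : wGen q * zGen q =
    ((q : ℂ) ^ 2) • (zGen q * wGen q) + ((1 : ℂ) - (q : ℂ) ^ 2) • (1 : PolDisc q) := by
  simpa only [map_mul, map_add, map_smul, map_one, zGen, wGen] using
    RingQuot.mkAlgHom_rel ℂ (DiscRel.rel (q := q))

theorem adjoin_zGen_wGen (q : ℝ) : Algebra.adjoin ℂ {zGen q, wGen q} = ⊤ := by
  have : ({zGen q, wGen q} : Set (PolDisc q)) =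
      RingQuot.mkAlgHom ℂ (DiscRel q) '' Set.range (FreeAlgebra.ι ℂ) := by
    rw [← Set.range_comp]
    ext x; constructor
    · rintro (rfl | rfl)
      exacts [⟨true, rfl⟩, ⟨false, rfl⟩]
    · rintro ⟨(_ | _), rfl⟩
      exacts [Or.inr rfl, Or.inl rfl]
  rw [this, Algebra.adjoin_image, FreeAlgebra.adjoin_range_ι, Algebra.map_top,
    AlgHom.range_eq_top]
  exact RingQuot.mkAlgHom_surjective ℂ (DiscRel q)

theorem span_orderedMonomial_zGen_wGen (q : ℝ) :
    Submodule.span ℂ (Set.range (orderedMonomial (zGen q) (wGen q))) = ⊤ :=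
  top_le_iff.mp <| by
    simpa [adjoin_zGen_wGen] using adjoin_le_span_orderedMonomial (wGen_mul_zGen q)

theorem inner_fockBasis_left (n : ℕ) (f : ℓ²(ℕ, ℂ)) : ⟪fockBasis n, f⟫_ℂ = f n := by
  simp [fockBasis, lp.inner_single_left]

theorem inner_fockBasis_fockBasis (m n : ℕ) :
    ⟪fockBasis m, fockBasis n⟫_ℂ = if m = n then 1 else 0 := by
  rw [inner_fockBasis_left, fockBasis, lp.single_apply]
  simp [Pi.single_apply]

theorem fockBasis_ext {f g : ℓ²(ℕ, ℂ)} (h : ∀ n, ⟪fockBasis n, f⟫_ℂ = ⟪fockBasis n, g⟫_ℂ) :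
    f = g :=
  lp.ext <| funext fun n => by simpa [inner_fockBasis_left] using h n

section WeightedShift

variable {c : ℕ → ℂ} {T : ℓ²(ℕ, ℂ) →L[ℂ] ℓ²(ℕ, ℂ)}
  (hT : ∀ n, T (fockBasis n) = c n • fockBasis (n + 1))
include hT

theorem adjoint_apply_fockBasis_zero : adjoint T (fockBasis 0) = 0 :=
  fockBasis_ext fun n => by
    simp [adjoint_inner_right, hT, inner_smul_left, inner_fockBasis_fockBasis]

theorem adjoint_apply_fockBasis_succ (m : ℕ) :
    adjoint T (fockBasis (m + 1)) = conj (c m) • fockBasis m :=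
  fockBasis_ext fun n => by
    rw [adjoint_inner_right, hT, inner_smul_left, inner_smul_right, inner_fockBasis_fockBasis,
      inner_fockBasis_fockBasis]
    by_cases h : n = m <;> simp [h]

theorem pow_apply_fockBasis (k n : ℕ) :
    (T ^ k) (fockBasis n) = (∏ i ∈ range k, c (n + i)) • fockBasis (n + k) := by
  induction k with
  | zero => simp
  | succ k ih =>
    rw [pow_succ', mul_apply_eq_comp, ih, map_smul, hT, smul_smul, prod_range_succ, mul_comm,
      ← add_assoc]

theorem adjoint_pow_apply_fockBasis_add (l n : ℕ) :
    (adjoint T ^ l) (fockBasis (n + l)) = (∏ i ∈ range l, conj (c (n + i))) • fockBasis n := by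
  induction l with
  | zero => simp
  | succ l ih =>
    rw [pow_succ, mul_apply_eq_comp, ← add_assoc, adjoint_apply_fockBasis_succ hT, map_smul, ih,
      smul_smul, prod_range_succ, mul_comm]

theorem adjoint_pow_apply_fockBasis_of_lt {l n : ℕ} (h : n < l) :
    (adjoint T ^ l) (fockBasis n) = 0 := by
  induction l generalizing n with
  | zero => omega
  | succ l ih =>
    rw [pow_succ, mul_apply_eq_comp]
    rcases n with _ | m
    · rw [adjoint_apply_fockBasis_zero hT, map_zero]
    · rw [adjoint_apply_fockBasis_succ hT, map_smul, ih (by omega), smul_zero]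

theorem inner_fockBasis_pow_mul_adjoint_pow_apply_fockBasis (k k' l : ℕ) :
    ⟪fockBasis k, (T ^ k' * adjoint T ^ l) (fockBasis l)⟫_ℂ =
      if k' = k then (∏ i ∈ range l, conj (c i)) * ∏ i ∈ range k', c i else 0 := by
  have hadjoint := adjoint_pow_apply_fockBasis_add hT l 0
  simp only [zero_add] at hadjoint
  rw [mul_apply_eq_comp, hadjoint, map_smul, pow_apply_fockBasis hT, inner_smul_right,
    inner_smul_right, inner_fockBasis_fockBasis]
  split_ifs <;> simp_all [eq_comm, mul_comm]

theorem linearIndependent_pow_mul_adjoint_pow (hc : ∀ n, c n ≠ 0) :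
    LinearIndependent ℂ (fun p : ℕ × ℕ => T ^ p.1 * adjoint T ^ p.2) := by
  rw [linearIndependent_iff']
  intro s g hsum
  suffices ∀ l k, (k, l) ∈ s → g (k, l) = 0 from fun p hp => this p.2 p.1 hp
  intro l
  induction l using Nat.strong_induction_on with
  | _ l ih =>
    intro k hkl
    have hcoeff :
        ∑ p ∈ s, g p * ⟪fockBasis k, (T ^ p.1 * adjoint T ^ p.2) (fockBasis l)⟫_ℂ = 0 := by
      simpa [_root_.sum_apply, inner_sum, inner_smul_right] using
        congrArg (fun B : ℓ²(ℕ, ℂ) →L[ℂ] ℓ²(ℕ, ℂ) => ⟪fockBasis k, B (fockBasis l)⟫_ℂ) hsum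
    rw [sum_eq_single_of_mem (k, l) hkl, inner_fockBasis_pow_mul_adjoint_pow_apply_fockBasis hT,
      if_pos rfl] at hcoeff
    · simpa [prod_eq_zero_iff, hc] using hcoeff
    rintro ⟨k', l'⟩ hp hne
    rcases lt_trichotomy l' l with hl | rfl | hl
    · rw [ih l' hl k' hp, zero_mul]
    · rw [inner_fockBasis_pow_mul_adjoint_pow_apply_fockBasis hT, if_neg, mul_zero]
      rintro rfl
      exact hne rfl
    · rw [mul_apply_eq_comp, adjoint_pow_apply_fockBasis_of_lt hT hl, map_zero, inner_zero_right,
        mul_zero]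

end WeightedShift

/-- The Fock representation of the quantum disc algebra, i.e. the unital algebra
homomorphism sending `z` to `T` and `w` to `T*`, is faithful. -/
theorem fock_representation_faithful (q : ℝ) (hq0 : 0 < q) (hq1 : q < 1)
    (T : lp (fun _ : ℕ => ℂ) 2 →L[ℂ] lp (fun _ : ℕ => ℂ) 2)
    (hT : ∀ n : ℕ, T (fockBasis n) =
      (Real.sqrt (1 - q ^ (2 * (n + 1))) : ℂ) • fockBasis (n + 1))
    (φ : PolDisc q →ₐ[ℂ] (lp (fun _ : ℕ => ℂ) 2 →L[ℂ] lp (fun _ : ℕ => ℂ) 2))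
    (hz : φ (zGen q) = T)
    (hw : φ (wGen q) = ContinuousLinearMap.adjoint T) :
    Function.Injective φ := by
  have hweight (n : ℕ) : ((Real.sqrt (1 - q ^ (2 * (n + 1))) : ℝ) : ℂ) ≠ 0 := by
    have : q ^ (2 * (n + 1)) < 1 := pow_lt_one₀ hq0.le hq1 (by omega)
    exact Complex.ofReal_ne_zero.mpr (Real.sqrt_pos.mpr (by linarith)).ne'
  have himage : φ.toLinearMap ∘ orderedMonomial (zGen q) (wGen q) =
      fun p => T ^ p.1 * adjoint T ^ p.2 := by
    funext p
    simp [orderedMonomial, hz, hw]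
  refine LinearMap.injective_of_linearIndependent (f := φ.toLinearMap)
    (span_orderedMonomial_zGen_wGen q) ?_
  rw [himage]
  exact linearIndependent_pow_mul_adjoint_pow hT hweight
end
end

section
/- There exists a unique ℂ-linear functional s̄ on ℂ[SL₂]_q such that s̄(1) = 1 and, for every f ∈ ℂ[SL₂]_q: s̄(t₂₂ f) = 0, s̄(f t₁₁) = 0, s̄(t₁₂ f) = s̄(f t₁₂) = q·s̄(f), and s̄(t₂₁ f) = s̄(f t₂₁) = −s̄(f). In particular s̄(t₁₁) = 0, s̄(t₁₂) = q, s̄(t₂₁) = −1, s̄(t₂₂) = 0, so s̄ is a quantum analog of the Weyl group element (0 1; −1 0) of SL₂. -/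
noncomputable section

namespace QuantumSL2

/-- The free algebra on the four generators `t₁₁, t₁₂, t₂₁, t₂₂` (indexed by `Fin 4`). -/
abbrev F4 := FreeAlgebra ℂ (Fin 4)

/-- The free generator corresponding to `t₁₁`. -/
def a : F4 := FreeAlgebra.ι ℂ 0
/-- The free generator corresponding to `t₁₂`. -/
def b : F4 := FreeAlgebra.ι ℂ 1
/-- The free generator corresponding to `t₂₁`. -/
def c : F4 := FreeAlgebra.ι ℂ 2
/-- The free generator corresponding to `t₂₂`. -/
def d : F4 := FreeAlgebra.ι ℂ 3

/-- The defining relations of the quantum group algebra `ℂ[SL₂]_q`. -/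
inductive SLRel (q : ℝ) : F4 → F4 → Prop
  | r1 : SLRel q (a * b) ((q : ℂ) • (b * a))
  | r2 : SLRel q (a * c) ((q : ℂ) • (c * a))
  | r3 : SLRel q (b * d) ((q : ℂ) • (d * b))
  | r4 : SLRel q (c * d) ((q : ℂ) • (d * c))
  | r5 : SLRel q (b * c) (c * b)
  | r6 : SLRel q (a * d - d * a) (((q : ℂ) - (q : ℂ)⁻¹) • (b * c))
  | r7 : SLRel q (a * d - (q : ℂ) • (b * c)) 1

/-- The quantum group algebra `ℂ[SL₂]_q`. -/
abbrev SL2q (q : ℝ) := RingQuot (SLRel q)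

/-- The generator `t₁₁` of `ℂ[SL₂]_q`. -/
def t11 (q : ℝ) : SL2q q := RingQuot.mkAlgHom ℂ (SLRel q) a
/-- The generator `t₁₂` of `ℂ[SL₂]_q`. -/
def t12 (q : ℝ) : SL2q q := RingQuot.mkAlgHom ℂ (SLRel q) b
/-- The generator `t₂₁` of `ℂ[SL₂]_q`. -/
def t21 (q : ℝ) : SL2q q := RingQuot.mkAlgHom ℂ (SLRel q) c
/-- The generator `t₂₂` of `ℂ[SL₂]_q`. -/
def t22 (q : ℝ) : SL2q q := RingQuot.mkAlgHom ℂ (SLRel q) d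

end QuantumSL2

open QuantumSL2

/-!
Existence: `ℂ[SL₂]_q` acts on `ℕ →₀ ℂ` (basis `eₙ`) by
`t₁₁ eₙ = (1 - q^{2n}) eₙ₋₁`, `t₁₂ eₙ = q^{n+1} eₙ`, `t₂₁ eₙ = -qⁿ eₙ`, `t₂₂ eₙ = eₙ₊₁`,
and `s̄ f` is the coefficient of `e₀` in `f • e₀`: the lowering operator `t₁₁` kills `e₀`,
the raising operator `t₂₂` has no `e₀` component, and `t₁₂`, `t₂₁` act on `e₀` by `q` and `-1`.

Uniqueness: the ordered monomials `t₁₁ⁱ t₁₂ʲ t₂₁ᵏ` and `t₁₂ʲ t₂₁ᵏ t₂₂ˡ` span `ℂ[SL₂]_q`, because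
their span contains `1` and is stable under left multiplication by the generators (the
commutation relations reorder a product, and `t₂₂ t₁₁ = 1 + q⁻¹ t₁₂ t₂₁` lowers the degree). The
defining properties of `s̄` determine its value on each ordered monomial.
-/

section

variable {K R : Type*} [CommSemiring K] [Semiring R] [Algebra K R]

theorem mul_pow_mul_of_mul_eq_smul {x y : R} {γ : K} (h : x * y = γ • (y * x)) (n : ℕ)
    (z : R) : x * (y ^ n * z) = γ ^ n • (y ^ n * (x * z)) := by
  induction n with
  | zero => simp
  | succ n ih =>
    rw [pow_succ', mul_assoc, ← mul_assoc x, h, smul_mul_assoc, mul_assoc, ih, mul_smul_comm,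
      smul_smul, pow_succ', mul_assoc]

theorem Submodule.span_eq_top_of_mul_mem {s T : Set R} (hs : Algebra.adjoin K s = ⊤)
    (hone : 1 ∈ span K T) (hmul : ∀ x ∈ s, ∀ t ∈ T, x * t ∈ span K T) : span K T = ⊤ := by
  have hmul_span : ∀ a : R, ∀ m ∈ span K T, a * m ∈ span K T := by
    intro a
    induction (hs ▸ Algebra.mem_top : a ∈ Algebra.adjoin K s) using Algebra.adjoin_induction with
    | mem x hx =>
      intro m hm
      induction hm using span_induction with
      | mem t ht => exact hmul x hx t ht
      | zero => simp
      | add u v _ _ hu hv => rw [mul_add]; exact add_mem hu hv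
      | smul r u _ hu => rw [mul_smul_comm]; exact smul_mem _ r hu
    | algebraMap r =>
      intro m hm
      rw [Algebra.algebraMap_eq_smul_one, smul_mul_assoc, one_mul]
      exact smul_mem _ r hm
    | add x y _ _ hx hy => intro m hm; rw [add_mul]; exact add_mem (hx m hm) (hy m hm)
    | mul x y _ _ hx hy => intro m hm; rw [mul_assoc]; exact hx _ (hy m hm)
  exact eq_top_iff.2 fun a _ => by simpa using hmul_span a 1 hone

theorem map_pow_mul_of_map_mul_eq_mul (φ : R →ₗ[K] K) {x : R} {γ : K}
    (h : ∀ f, φ (x * f) = γ * φ f) (n : ℕ) (f : R) : φ (x ^ n * f) = γ ^ n * φ f := by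
  induction n with
  | zero => simp
  | succ n ih => rw [pow_succ', mul_assoc, h, ih, pow_succ', mul_assoc]

theorem map_mul_pow_of_map_mul_eq_mul (φ : R →ₗ[K] K) {x : R} {γ : K}
    (h : ∀ f, φ (f * x) = γ * φ f) (n : ℕ) (f : R) : φ (f * x ^ n) = γ ^ n * φ f := by
  induction n with
  | zero => simp
  | succ n ih => rw [pow_succ, ← mul_assoc, h, ih, pow_succ', mul_assoc]

end

theorem RingQuot.adjoin_range_mkAlgHom_ι {R X : Type*} [CommSemiring R]
    (r : FreeAlgebra R X → FreeAlgebra R X → Prop) :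
    Algebra.adjoin R (Set.range (RingQuot.mkAlgHom R r ∘ FreeAlgebra.ι R)) = ⊤ := by
  rw [Set.range_comp, Algebra.adjoin_image, FreeAlgebra.adjoin_range_ι, Algebra.map_top,
    AlgHom.range_eq_top]
  exact RingQuot.mkAlgHom_surjective R r

namespace QuantumSL2

variable {q : ℝ}

local notation "A" => t11 q
local notation "B" => t12 q
local notation "C" => t21 q
local notation "D" => t22 q
local notation "Q" => (q : ℂ)

theorem t11_mul_t12 : A * B = Q • (B * A) := by
  simpa only [t11, t12, map_mul, map_smul] using RingQuot.mkAlgHom_rel ℂ (SLRel.r1 (q := q))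

theorem t11_mul_t21 : A * C = Q • (C * A) := by
  simpa only [t11, t21, map_mul, map_smul] using RingQuot.mkAlgHom_rel ℂ (SLRel.r2 (q := q))

theorem t12_mul_t22 : B * D = Q • (D * B) := by
  simpa only [t12, t22, map_mul, map_smul] using RingQuot.mkAlgHom_rel ℂ (SLRel.r3 (q := q))

theorem t21_mul_t22 : C * D = Q • (D * C) := by
  simpa only [t21, t22, map_mul, map_smul] using RingQuot.mkAlgHom_rel ℂ (SLRel.r4 (q := q))

theorem commute_t12_t21 : Commute B C := by
  simpa only [commute_iff_eq, t12, t21, map_mul] using RingQuot.mkAlgHom_rel ℂ (SLRel.r5 (q := q))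

theorem t11_mul_t22 : A * D = 1 + Q • (B * C) := by
  refine sub_eq_iff_eq_add.mp ?_
  simpa only [t11, t12, t21, t22, map_mul, map_smul, map_sub, map_one] using
    RingQuot.mkAlgHom_rel ℂ (SLRel.r7 (q := q))

theorem t22_mul_t11 : D * A = 1 + Q⁻¹ • (B * C) := by
  have h : A * D - D * A = (Q - Q⁻¹) • (B * C) := by
    simpa only [t11, t12, t21, t22, map_mul, map_smul, map_sub] using
      RingQuot.mkAlgHom_rel ℂ (SLRel.r6 (q := q))
  rw [t11_mul_t22, sub_eq_iff_eq_add'] at h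
  rw [eq_sub_of_add_eq h.symm]
  module

theorem t12_mul_t11 (hq : q ≠ 0) : B * A = Q⁻¹ • (A * B) :=
  (eq_inv_smul_iff₀ (by exact_mod_cast hq)).2 t11_mul_t12.symm

theorem t21_mul_t11 (hq : q ≠ 0) : C * A = Q⁻¹ • (A * C) :=
  (eq_inv_smul_iff₀ (by exact_mod_cast hq)).2 t11_mul_t21.symm

theorem t22_mul_t12 (hq : q ≠ 0) : D * B = Q⁻¹ • (B * D) :=
  (eq_inv_smul_iff₀ (by exact_mod_cast hq)).2 t12_mul_t22.symm

theorem t22_mul_t21 (hq : q ≠ 0) : D * C = Q⁻¹ • (C * D) :=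
  (eq_inv_smul_iff₀ (by exact_mod_cast hq)).2 t21_mul_t22.symm

def orderedMonomials (q : ℝ) : Set (SL2q q) :=
  {x | (∃ i j k : ℕ, x = t11 q ^ i * (t12 q ^ j * t21 q ^ k)) ∨
    ∃ j k l : ℕ, x = t12 q ^ j * (t21 q ^ k * t22 q ^ l)}

open Submodule

theorem pow_t11_t12_t21_mem_span (i j k : ℕ) :
    A ^ i * (B ^ j * C ^ k) ∈ span ℂ (orderedMonomials q) :=
  subset_span (Or.inl ⟨i, j, k, rfl⟩)

theorem pow_t12_t21_t22_mem_span (j k l : ℕ) :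
    B ^ j * (C ^ k * D ^ l) ∈ span ℂ (orderedMonomials q) :=
  subset_span (Or.inr ⟨j, k, l, rfl⟩)

theorem t11_mul_mem_span {x : SL2q q} (hx : x ∈ orderedMonomials q) :
    A * x ∈ span ℂ (orderedMonomials q) := by
  rcases hx with ⟨i, j, k, rfl⟩ | ⟨j, k, _ | l, rfl⟩
  · rw [← mul_assoc, ← pow_succ']
    exact pow_t11_t12_t21_mem_span _ _ _
  · simpa using pow_t11_t12_t21_mem_span 1 j k
  · have h : A * (B ^ j * (C ^ k * D ^ (l + 1))) = (Q ^ j * Q ^ k) •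
        (B ^ j * (C ^ k * D ^ l) + Q • (B ^ (j + 1) * (C ^ (k + 1) * D ^ l))) := by
      rw [mul_pow_mul_of_mul_eq_smul t11_mul_t12, mul_pow_mul_of_mul_eq_smul t11_mul_t21,
        pow_succ' D, ← mul_assoc A, t11_mul_t22, add_mul, one_mul, smul_mul_assoc]
      simp only [mul_add, mul_smul_comm, smul_add, smul_smul, mul_assoc]
      rw [← mul_assoc (C ^ k) B, ← (commute_t12_t21.pow_right k).eq]
      simp only [pow_succ, mul_assoc]
    rw [h]
    exact smul_mem _ _ (add_mem (pow_t12_t21_t22_mem_span _ _ _)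
      (smul_mem _ _ (pow_t12_t21_t22_mem_span _ _ _)))

theorem t12_mul_mem_span (hq : q ≠ 0) {x : SL2q q} (hx : x ∈ orderedMonomials q) :
    B * x ∈ span ℂ (orderedMonomials q) := by
  rcases hx with ⟨i, j, k, rfl⟩ | ⟨j, k, l, rfl⟩
  · rw [mul_pow_mul_of_mul_eq_smul (t12_mul_t11 hq), ← mul_assoc B, ← pow_succ']
    exact smul_mem _ _ (pow_t11_t12_t21_mem_span _ _ _)
  · rw [← mul_assoc, ← pow_succ']
    exact pow_t12_t21_t22_mem_span _ _ _

theorem t21_mul_mem_span (hq : q ≠ 0) {x : SL2q q} (hx : x ∈ orderedMonomials q) :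
    C * x ∈ span ℂ (orderedMonomials q) := by
  rcases hx with ⟨i, j, k, rfl⟩ | ⟨j, k, l, rfl⟩
  · rw [mul_pow_mul_of_mul_eq_smul (t21_mul_t11 hq), ← mul_assoc C,
      ← (commute_t12_t21.pow_left j).eq, mul_assoc, ← pow_succ']
    exact smul_mem _ _ (pow_t11_t12_t21_mem_span _ _ _)
  · rw [← mul_assoc C, ← (commute_t12_t21.pow_left j).eq, mul_assoc, ← mul_assoc C, ← pow_succ']
    exact pow_t12_t21_t22_mem_span _ _ _

theorem t22_mul_mem_span (hq : q ≠ 0) {x : SL2q q} (hx : x ∈ orderedMonomials q) :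
    D * x ∈ span ℂ (orderedMonomials q) := by
  rcases hx with ⟨_ | i, j, k, rfl⟩ | ⟨j, k, l, rfl⟩
  · rw [pow_zero, one_mul, mul_pow_mul_of_mul_eq_smul (t22_mul_t12 hq), ← mul_one (C ^ k),
      mul_pow_mul_of_mul_eq_smul (t22_mul_t21 hq), mul_one, ← pow_one D, mul_smul_comm]
    exact smul_mem _ _ (smul_mem _ _ (pow_t12_t21_t22_mem_span _ _ _))
  · have h : D * (A ^ (i + 1) * (B ^ j * C ^ k)) = A ^ i * (B ^ j * C ^ k) +
        (Q⁻¹ * Q⁻¹ ^ i * Q⁻¹ ^ i) • (A ^ i * (B ^ (j + 1) * C ^ (k + 1))) := by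
      rw [pow_succ' A, mul_assoc, ← mul_assoc D, t22_mul_t11, add_mul, one_mul, smul_mul_assoc,
        mul_assoc B, mul_pow_mul_of_mul_eq_smul (t21_mul_t11 hq), mul_smul_comm,
        mul_pow_mul_of_mul_eq_smul (t12_mul_t11 hq), ← mul_assoc C,
        ← (commute_t12_t21.pow_left j).eq, mul_assoc, ← pow_succ', ← mul_assoc B, ← pow_succ',
        smul_smul, smul_smul]
    rw [h]
    exact add_mem (pow_t11_t12_t21_mem_span _ _ _) (smul_mem _ _ (pow_t11_t12_t21_mem_span _ _ _))
  · rw [mul_pow_mul_of_mul_eq_smul (t22_mul_t12 hq), mul_pow_mul_of_mul_eq_smul (t22_mul_t21 hq),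
      ← pow_succ', mul_smul_comm]
    exact smul_mem _ _ (smul_mem _ _ (pow_t12_t21_t22_mem_span _ _ _))

theorem span_orderedMonomials (hq : q ≠ 0) : span ℂ (orderedMonomials q) = ⊤ := by
  refine span_eq_top_of_mul_mem (RingQuot.adjoin_range_mkAlgHom_ι (SLRel q))
    (by simpa using pow_t11_t12_t21_mem_span (q := q) 0 0 0) ?_
  rintro _ ⟨i, rfl⟩ x hx
  fin_cases i
  exacts [t11_mul_mem_span hx, t12_mul_mem_span hq hx, t21_mul_mem_span hq hx,
    t22_mul_mem_span hq hx]

structure IsWeylFunctional (s : SL2q q →ₗ[ℂ] ℂ) : Prop where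
  map_one : s 1 = 1
  map_t22_mul (f : SL2q q) : s (D * f) = 0
  map_mul_t11 (f : SL2q q) : s (f * A) = 0
  map_t12_mul (f : SL2q q) : s (B * f) = Q * s f
  map_mul_t12 (f : SL2q q) : s (f * B) = Q * s f
  map_t21_mul (f : SL2q q) : s (C * f) = -s f
  map_mul_t21 (f : SL2q q) : s (f * C) = -s f

namespace IsWeylFunctional

variable {s : SL2q q →ₗ[ℂ] ℂ}

theorem map_pow_t11_t12_t21 (hs : IsWeylFunctional s) (i j k : ℕ) :
    s (A ^ i * (B ^ j * C ^ k)) = if i = 0 then Q ^ j * (-1) ^ k else 0 := by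
  rw [← mul_assoc, map_mul_pow_of_map_mul_eq_mul s (γ := -1) (by simpa using hs.map_mul_t21),
    map_mul_pow_of_map_mul_eq_mul s hs.map_mul_t12]
  rcases i with _ | i
  · simp [hs.map_one, mul_comm]
  · simp [pow_succ, hs.map_mul_t11]

theorem map_pow_t12_t21_t22 (hs : IsWeylFunctional s) (j k l : ℕ) :
    s (B ^ j * (C ^ k * D ^ l)) = if l = 0 then Q ^ j * (-1) ^ k else 0 := by
  rw [map_pow_mul_of_map_mul_eq_mul s hs.map_t12_mul,
    map_pow_mul_of_map_mul_eq_mul s (γ := -1) (by simpa using hs.map_t21_mul)]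
  rcases l with _ | l
  · simp [hs.map_one]
  · simp [pow_succ', hs.map_t22_mul]

theorem ext (hq : q ≠ 0) {s' : SL2q q →ₗ[ℂ] ℂ} (hs : IsWeylFunctional s)
    (hs' : IsWeylFunctional s') : s = s' := by
  refine LinearMap.ext_on (span_orderedMonomials hq) ?_
  rintro _ (⟨i, j, k, rfl⟩ | ⟨j, k, l, rfl⟩)
  · rw [hs.map_pow_t11_t12_t21, hs'.map_pow_t11_t12_t21]
  · rw [hs.map_pow_t12_t21_t22, hs'.map_pow_t12_t21_t22]

end IsWeylFunctional

-- The coefficient vanishes at `n = 0`, so the truncated subtraction `0 - 1 = 0` is harmless.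
def fockT11 (q : ℝ) : Module.End ℂ (ℕ →₀ ℂ) :=
  Finsupp.lsum ℂ fun n => (1 - (q : ℂ) ^ (2 * n)) • Finsupp.lsingle (n - 1)
def fockT12 (q : ℝ) : Module.End ℂ (ℕ →₀ ℂ) :=
  Finsupp.lsum ℂ fun n => (q : ℂ) ^ (n + 1) • Finsupp.lsingle n
def fockT21 (q : ℝ) : Module.End ℂ (ℕ →₀ ℂ) :=
  Finsupp.lsum ℂ fun n => -(q : ℂ) ^ n • Finsupp.lsingle n
def fockT22 : Module.End ℂ (ℕ →₀ ℂ) :=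
  Finsupp.lsum ℂ fun n => Finsupp.lsingle (n + 1)

@[simp] theorem fockT11_single (n : ℕ) (x : ℂ) :
    fockT11 q (.single n x) = .single (n - 1) ((1 - (q : ℂ) ^ (2 * n)) * x) := by
  simp [fockT11]
@[simp] theorem fockT12_single (n : ℕ) (x : ℂ) :
    fockT12 q (.single n x) = .single n ((q : ℂ) ^ (n + 1) * x) := by
  simp [fockT12]
@[simp] theorem fockT21_single (n : ℕ) (x : ℂ) :
    fockT21 q (.single n x) = .single n (-(q : ℂ) ^ n * x) := by
  simp [fockT21]
@[simp] theorem fockT22_single (n : ℕ) (x : ℂ) :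
    fockT22 (.single n x) = .single (n + 1) x := by
  simp [fockT22]

def fockFree (q : ℝ) : FreeAlgebra ℂ (Fin 4) →ₐ[ℂ] Module.End ℂ (ℕ →₀ ℂ) :=
  FreeAlgebra.lift ℂ ![fockT11 q, fockT12 q, fockT21 q, fockT22]

@[simp] theorem fockFree_a : fockFree q a = fockT11 q := by simp [fockFree, a]
@[simp] theorem fockFree_b : fockFree q b = fockT12 q := by simp [fockFree, b]
@[simp] theorem fockFree_c : fockFree q c = fockT21 q := by simp [fockFree, c]
@[simp] theorem fockFree_d : fockFree q d = fockT22 := by simp [fockFree, d]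

theorem fockFree_rel (hq : q ≠ 0) ⦃x y : FreeAlgebra ℂ (Fin 4)⦄ (h : SLRel q x y) :
    fockFree q x = fockFree q y := by
  have hq : (q : ℂ) ≠ 0 := by exact_mod_cast hq
  cases h <;>
  · simp only [map_mul, map_sub, map_smul, map_one, fockFree_a, fockFree_b, fockFree_c,
      fockFree_d]
    refine Finsupp.lhom_ext fun n x => ?_
    rcases n with _ | n <;>
    simp only [Module.End.mul_apply, LinearMap.sub_apply, LinearMap.smul_apply,
      Module.End.one_apply, fockT11_single, fockT12_single, fockT21_single, fockT22_single,
      Finsupp.smul_single, smul_eq_mul, Nat.add_sub_cancel, pow_zero, mul_zero, sub_self,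
      zero_mul, Finsupp.single_zero, map_zero, sub_zero, smul_zero, ← Finsupp.single_sub] <;>
    congr 1 <;> first | ring1 | (field_simp; ring1)

theorem fockT12_apply_zero (w : ℕ →₀ ℂ) : fockT12 q w 0 = q * w 0 := by
  induction w using Finsupp.induction_linear with
  | zero => simp
  | add v w hv hw => simp [hv, hw, mul_add]
  | single n x => rcases n with _ | n <;> simp

theorem fockT21_apply_zero (w : ℕ →₀ ℂ) : fockT21 q w 0 = -w 0 := by
  induction w using Finsupp.induction_linear with
  | zero => simp
  | add v w hv hw => simp [hv, hw, add_comm]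
  | single n x => rcases n with _ | n <;> simp

theorem fockT22_apply_zero (w : ℕ →₀ ℂ) : fockT22 w 0 = 0 := by
  induction w using Finsupp.induction_linear with
  | zero => simp
  | add v w hv hw => simp [hv, hw]
  | single n x => simp

theorem fockT12_vacuum : fockT12 q (.single 0 1) = (q : ℂ) • .single 0 1 := by
  simp

def fockRep (hq : q ≠ 0) : SL2q q →ₐ[ℂ] Module.End ℂ (ℕ →₀ ℂ) :=
  RingQuot.liftAlgHom ℂ ⟨fockFree q, fockFree_rel hq⟩

@[simp] theorem fockRep_t11 (hq : q ≠ 0) : fockRep hq (t11 q) = fockT11 q := by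
  simp [fockRep, t11]
@[simp] theorem fockRep_t12 (hq : q ≠ 0) : fockRep hq (t12 q) = fockT12 q := by
  simp [fockRep, t12]
@[simp] theorem fockRep_t21 (hq : q ≠ 0) : fockRep hq (t21 q) = fockT21 q := by
  simp [fockRep, t21]
@[simp] theorem fockRep_t22 (hq : q ≠ 0) : fockRep hq (t22 q) = fockT22 := by
  simp [fockRep, t22]

def weylFunctional (hq : q ≠ 0) : SL2q q →ₗ[ℂ] ℂ :=
  Finsupp.lapply 0 ∘ₗ LinearMap.applyₗ (Finsupp.single 0 1) ∘ₗ (fockRep hq).toLinearMap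

theorem weylFunctional_apply (hq : q ≠ 0) (f : SL2q q) :
    weylFunctional hq f = fockRep hq f (Finsupp.single 0 1) 0 := rfl

theorem isWeylFunctional_weylFunctional (hq : q ≠ 0) :
    IsWeylFunctional (weylFunctional hq) where
  map_one := by simp [weylFunctional_apply]
  map_t22_mul f := by simp [weylFunctional_apply, fockT22_apply_zero]
  map_mul_t11 f := by simp [weylFunctional_apply]
  map_t12_mul f := by simp [weylFunctional_apply, fockT12_apply_zero]
  map_mul_t12 f := by
    rw [weylFunctional_apply, map_mul, Module.End.mul_apply, fockRep_t12, fockT12_vacuum,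
      map_smul, Finsupp.smul_apply, smul_eq_mul, weylFunctional_apply]
  map_t21_mul f := by simp [weylFunctional_apply, fockT21_apply_zero]
  map_mul_t21 f := by simp [weylFunctional_apply]

end QuantumSL2

theorem sl2q_weyl_functional_general (q : ℝ) (hq0 : 0 < q) :
    (∃! s : SL2q q →ₗ[ℂ] ℂ,
      s 1 = 1 ∧
      (∀ f : SL2q q, s (t22 q * f) = 0) ∧
      (∀ f : SL2q q, s (f * t11 q) = 0) ∧
      (∀ f : SL2q q, s (t12 q * f) = (q : ℂ) * s f) ∧
      (∀ f : SL2q q, s (f * t12 q) = (q : ℂ) * s f) ∧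
      (∀ f : SL2q q, s (t21 q * f) = -s f) ∧
      (∀ f : SL2q q, s (f * t21 q) = -s f)) ∧
    (∀ s : SL2q q →ₗ[ℂ] ℂ,
      s 1 = 1 →
      (∀ f : SL2q q, s (t22 q * f) = 0) →
      (∀ f : SL2q q, s (f * t11 q) = 0) →
      (∀ f : SL2q q, s (t12 q * f) = (q : ℂ) * s f) →
      (∀ f : SL2q q, s (f * t12 q) = (q : ℂ) * s f) →
      (∀ f : SL2q q, s (t21 q * f) = -s f) →
      (∀ f : SL2q q, s (f * t21 q) = -s f) →
      s (t11 q) = 0 ∧ s (t12 q) = (q : ℂ) ∧ s (t21 q) = -1 ∧ s (t22 q) = 0) := by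
  have hq := hq0.ne'
  have weyl := isWeylFunctional_weylFunctional hq
  refine ⟨⟨weylFunctional hq, ⟨weyl.1, weyl.2, weyl.3, weyl.4, weyl.5, weyl.6, weyl.7⟩, ?_⟩, ?_⟩
  · rintro s ⟨h1, h22, h11, h12, h12', h21, h21'⟩
    exact IsWeylFunctional.ext hq ⟨h1, h22, h11, h12, h12', h21, h21'⟩ weyl
  · intro s h1 h22 h11 h12 _ h21 _
    exact ⟨by simpa using h11 1, by simpa [h1] using h12 1, by simpa [h1] using h21 1,
      by simpa using h22 1⟩

/-- There is a unique `ℂ`-linear functional `s̄` on `ℂ[SL₂]_q` with `s̄(1) = 1`,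
`s̄(t₂₂ f) = 0`, `s̄(f t₁₁) = 0`, `s̄(t₁₂ f) = s̄(f t₁₂) = q s̄(f)`,
`s̄(t₂₁ f) = s̄(f t₂₁) = −s̄(f)`; in particular `s̄(t₁₁) = 0`, `s̄(t₁₂) = q`,
`s̄(t₂₁) = −1`, `s̄(t₂₂) = 0`. -/
theorem sl2q_weyl_functional (q : ℝ) (hq0 : 0 < q) (hq1 : q < 1) :
    (∃! s : SL2q q →ₗ[ℂ] ℂ,
      s 1 = 1 ∧
      (∀ f : SL2q q, s (t22 q * f) = 0) ∧
      (∀ f : SL2q q, s (f * t11 q) = 0) ∧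
      (∀ f : SL2q q, s (t12 q * f) = (q : ℂ) * s f) ∧
      (∀ f : SL2q q, s (f * t12 q) = (q : ℂ) * s f) ∧
      (∀ f : SL2q q, s (t21 q * f) = -s f) ∧
      (∀ f : SL2q q, s (f * t21 q) = -s f)) ∧
    (∀ s : SL2q q →ₗ[ℂ] ℂ,
      s 1 = 1 →
      (∀ f : SL2q q, s (t22 q * f) = 0) →
      (∀ f : SL2q q, s (f * t11 q) = 0) →
      (∀ f : SL2q q, s (t12 q * f) = (q : ℂ) * s f) →
      (∀ f : SL2q q, s (f * t12 q) = (q : ℂ) * s f) →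
      (∀ f : SL2q q, s (t21 q * f) = -s f) →
      (∀ f : SL2q q, s (f * t21 q) = -s f) →
      s (t11 q) = 0 ∧ s (t12 q) = (q : ℂ) ∧ s (t21 q) = -1 ∧ s (t22 q) = 0) :=
  sl2q_weyl_functional_general q hq0
end
end

section
/- The quantum disc algebra Pol(ℂ)_q carries a U_q(sl₂)-module algebra structure: there exist a ℂ-algebra automorphism K of Pol(ℂ)_q and ℂ-linear maps E, F on Pol(ℂ)_q such that (i) K z = q² z and K w = q^{−2} w; (ii) E(fg) = E(f)g + K(f)E(g) and F(fg) = F(f)K^{−1}(g) + f F(g) for all f, g ∈ Pol(ℂ)_q; (iii) E z = −q^{1/2} z², E w = q^{−3/2}·1, F z = q^{1/2}·1, F w = −q^{5/2} w²; and (iv) as linear operators, K E K^{−1} = q² E, K F K^{−1} = q^{−2} F, and E F − F E = (K − K^{−1})/(q − q^{−1}). -/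
noncomputable section

/-!
`K` is the grading automorphism `z ↦ q² z`, `w ↦ q⁻² w`. A `(σ, τ)`-twisted derivation `D` is the
same thing as the algebra map `f ↦ [[σ f, D f], [0, τ f]]` into upper triangular `2 × 2` matrices,
so `E` and `F` exist as soon as their prescribed values on `z` and `w` respect the defining
relation. A twisted derivation of `Pol(ℂ)_q` is determined by its values on `z` and `w`, and the
two sides of each relation in (iv) are twisted derivations for the same pair of twists:
`(K, id)` for `E`, `(id, K⁻¹)` for `F`, and `(K, K⁻¹)` for `E F − F E` and `K − K⁻¹`. So each
relation reduces to a check on the two generators.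
-/

section TwistedDerivation

variable {R A : Type*} [CommRing R] [Ring A] [Algebra R A]

def IsTwistedDerivation (σ τ : A →ₐ[R] A) (D : A →ₗ[R] A) : Prop :=
  ∀ f g, D (f * g) = D f * τ g + σ f * D g

namespace IsTwistedDerivation

variable {σ τ : A →ₐ[R] A} {D : A →ₗ[R] A}

theorem map_one_eq_zero (hD : IsTwistedDerivation σ τ D) : D 1 = 0 := by
  simpa using hD 1 1

theorem map_algebraMap (hD : IsTwistedDerivation σ τ D) (c : R) :
    D (algebraMap R A c) = 0 := by
  rw [Algebra.algebraMap_eq_smul_one, map_smul, hD.map_one_eq_zero, smul_zero]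

theorem smul (hD : IsTwistedDerivation σ τ D) (c : R) : IsTwistedDerivation σ τ (c • D) := by
  intro f g
  simp only [LinearMap.smul_apply, hD f g, smul_add, smul_mul_assoc, mul_smul_comm]

theorem conj (hD : IsTwistedDerivation σ τ D) (K : A ≃ₐ[R] A)
    (hσ : ∀ f, K (σ (K.symm f)) = σ f) (hτ : ∀ f, K (τ (K.symm f)) = τ f) :
    IsTwistedDerivation σ τ (K.toLinearMap ∘ₗ D ∘ₗ K.symm.toLinearMap) := by
  intro f g
  simp only [LinearMap.comp_apply, AlgEquiv.toLinearMap_apply, map_mul, hD _ _, map_add, hσ, hτ]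

theorem commutator {k : Type*} [Field k] [Algebra k A] {K : A ≃ₐ[k] A} {E F : A →ₗ[k] A}
    {a : k} (ha : a ≠ 0) (hE : IsTwistedDerivation K (AlgHom.id k A) E)
    (hF : IsTwistedDerivation (AlgHom.id k A) K.symm F)
    (hKE : ∀ f, K (E (K.symm f)) = a • E f) (hKF : ∀ f, K (F (K.symm f)) = a⁻¹ • F f) :
    IsTwistedDerivation K K.symm (E ∘ₗ F - F ∘ₗ E) := by
  have cross_terms : ∀ f g, K (F f) * E (K.symm g) = F (K f) * K.symm (E g) := by
    intro f g
    have hF' : K (F f) = a⁻¹ • F (K f) := by simpa using hKF (K f)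
    have hE' : E (K.symm g) = a • K.symm (E g) := by simpa using congrArg K.symm (hKE g)
    rw [hF', hE', smul_mul_smul_comm, inv_mul_cancel₀ ha, one_smul]
  intro f g
  simp only [LinearMap.sub_apply, LinearMap.comp_apply, hE _ _, hF _ _, map_add,
    AlgHom.coe_id, id_eq, AlgEquiv.coe_toAlgHom, sub_mul, mul_sub, cross_terms]
  abel

end IsTwistedDerivation

theorem AlgHom.isTwistedDerivation_sub (σ τ : A →ₐ[R] A) :
    IsTwistedDerivation σ τ (σ.toLinearMap - τ.toLinearMap) := by
  intro f g
  simp only [LinearMap.sub_apply, AlgHom.toLinearMap_apply, map_mul, sub_mul, mul_sub]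
  abel

end TwistedDerivation

namespace PolDisc

variable {q : ℝ}

theorem wGen_mul_zGen :
    wGen q * zGen q = ((q : ℂ) ^ 2) • (zGen q * wGen q) + (1 - (q : ℂ) ^ 2) • 1 := by
  simpa [zGen, wGen] using RingQuot.mkAlgHom_rel ℂ (DiscRel.rel (q := q))

theorem wGen_mul_zGen_mul (x : PolDisc q) :
    wGen q * (zGen q * x) =
      ((q : ℂ) ^ 2) • (zGen q * (wGen q * x)) + (1 - (q : ℂ) ^ 2) • x := by
  rw [← mul_assoc, wGen_mul_zGen, add_mul, smul_mul_assoc, smul_mul_assoc, mul_assoc, one_mul]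

theorem induction_on {P : PolDisc q → Prop} (f : PolDisc q)
    (algebraMap : ∀ c : ℂ, P (algebraMap ℂ (PolDisc q) c)) (zGen : P (zGen q))
    (wGen : P (wGen q)) (add : ∀ f g, P f → P g → P (f + g))
    (mul : ∀ f g, P f → P g → P (f * g)) : P f := by
  obtain ⟨x, rfl⟩ := RingQuot.mkAlgHom_surjective ℂ (DiscRel q) f
  induction x using FreeAlgebra.induction with
  | grade0 c => simpa using algebraMap c
  | grade1 b =>
    cases b with
    | false => exact wGen
    | true => exact zGen
  | add x y hx hy => simpa using add _ _ hx hy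
  | mul x y hx hy => simpa using mul _ _ hx hy

section Lift

variable {A : Type*} [Semiring A] [Algebra ℂ A]

def lift (x y : A) (h : y * x = ((q : ℂ) ^ 2) • (x * y) + (1 - (q : ℂ) ^ 2) • 1) :
    PolDisc q →ₐ[ℂ] A :=
  RingQuot.liftAlgHom ℂ ⟨FreeAlgebra.lift ℂ fun b => cond b x y, by
    rintro _ _ ⟨⟩
    simpa using h⟩

variable {x y : A} {h : y * x = ((q : ℂ) ^ 2) • (x * y) + (1 - (q : ℂ) ^ 2) • 1}

@[simp]
theorem lift_zGen : lift x y h (zGen q) = x := by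
  simp [lift, zGen, RingQuot.liftAlgHom_mkAlgHom_apply]

@[simp]
theorem lift_wGen : lift x y h (wGen q) = y := by
  simp [lift, wGen, RingQuot.liftAlgHom_mkAlgHom_apply]

theorem algHom_ext {φ ψ : PolDisc q →ₐ[ℂ] A} (hz : φ (zGen q) = ψ (zGen q))
    (hw : φ (wGen q) = ψ (wGen q)) : φ = ψ := by
  refine RingQuot.ringQuot_ext' _ _ _ (FreeAlgebra.hom_ext (funext fun b => ?_))
  cases b with
  | false => exact hw
  | true => exact hz

end Lift

section Scale

def scaleHom (t : ℂ) (ht : t ≠ 0) : PolDisc q →ₐ[ℂ] PolDisc q :=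
  lift (t • zGen q) (t⁻¹ • wGen q) (by
    simp only [smul_mul_smul_comm, inv_mul_cancel₀ ht, mul_inv_cancel₀ ht, one_smul]
    exact wGen_mul_zGen)

def scale (t : ℂ) (ht : t ≠ 0) : PolDisc q ≃ₐ[ℂ] PolDisc q :=
  AlgEquiv.ofAlgHom (scaleHom t ht) (scaleHom t⁻¹ (inv_ne_zero ht))
    (algHom_ext (by simp [scaleHom, smul_smul, ht]) (by simp [scaleHom, smul_smul, ht]))
    (algHom_ext (by simp [scaleHom, smul_smul, ht]) (by simp [scaleHom, smul_smul, ht]))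

variable (t : ℂ) (ht : t ≠ 0)

@[simp] theorem scale_zGen : scale t ht (zGen q) = t • zGen q := by simp [scale, scaleHom]
@[simp] theorem scale_wGen : scale t ht (wGen q) = t⁻¹ • wGen q := by simp [scale, scaleHom]

@[simp] theorem scale_symm_zGen : (scale t ht).symm (zGen q) = t⁻¹ • zGen q := by
  simp [scale, scaleHom]

@[simp] theorem scale_symm_wGen : (scale t ht).symm (wGen q) = t • wGen q := by
  simp [scale, scaleHom]

end Scale

section TwistedDeriv

-- `h` is the `(0, 1)` entry of the defining relation for the triangular matrices of
-- `triangularHom`; the diagonal entries hold because `σ` and `τ` are algebra maps.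
variable (σ τ : PolDisc q →ₐ[ℂ] PolDisc q) (dz dw : PolDisc q)
  (h : σ (wGen q) * dz + dw * τ (zGen q) = ((q : ℂ) ^ 2) • (σ (zGen q) * dw + dz * τ (wGen q)))

def triangularHom : PolDisc q →ₐ[ℂ] Matrix (Fin 2) (Fin 2) (PolDisc q) :=
  lift !![σ (zGen q), dz; 0, τ (zGen q)] !![σ (wGen q), dw; 0, τ (wGen q)] (by
    have hσ := congrArg σ (wGen_mul_zGen (q := q))
    have hτ := congrArg τ (wGen_mul_zGen (q := q))
    simp only [map_mul, map_add, map_smul, map_one] at hσ hτ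
    ext i j
    fin_cases i <;> fin_cases j <;> simp [hσ, hτ, h])

def twistedDeriv : PolDisc q →ₗ[ℂ] PolDisc q :=
  Matrix.entryLinearMap ℂ (PolDisc q) 0 1 ∘ₗ (triangularHom σ τ dz dw h).toLinearMap

theorem triangularHom_zGen :
    triangularHom σ τ dz dw h (zGen q) = !![σ (zGen q), dz; 0, τ (zGen q)] :=
  lift_zGen

theorem triangularHom_wGen :
    triangularHom σ τ dz dw h (wGen q) = !![σ (wGen q), dw; 0, τ (wGen q)] :=
  lift_wGen

@[simp] theorem twistedDeriv_zGen : twistedDeriv σ τ dz dw h (zGen q) = dz := by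
  simp [twistedDeriv, triangularHom_zGen]

@[simp] theorem twistedDeriv_wGen : twistedDeriv σ τ dz dw h (wGen q) = dw := by
  simp [twistedDeriv, triangularHom_wGen]

theorem triangularHom_apply (f : PolDisc q) :
    triangularHom σ τ dz dw h f = !![σ f, twistedDeriv σ τ dz dw h f; 0, τ f] := by
  suffices triangularHom σ τ dz dw h f 0 0 = σ f ∧ triangularHom σ τ dz dw h f 1 0 = 0 ∧
      triangularHom σ τ dz dw h f 1 1 = τ f by
    obtain ⟨h00, h10, h11⟩ := this
    rw [Matrix.eta_fin_two (triangularHom σ τ dz dw h f), h00, h10, h11]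
    rfl
  induction f using induction_on with
  | algebraMap c => simp [Matrix.algebraMap_matrix_apply]
  | zGen => simp [triangularHom_zGen]
  | wGen => simp [triangularHom_wGen]
  | add f g hf hg => simp [hf, hg]
  | mul f g hf hg => simp [Matrix.mul_apply, Fin.sum_univ_two, hf, hg]

theorem isTwistedDerivation_twistedDeriv :
    IsTwistedDerivation σ τ (twistedDeriv σ τ dz dw h) := by
  intro f g
  have h01 := congrArg (· 0 1) (map_mul (triangularHom σ τ dz dw h) f g)
  simpa [triangularHom_apply, Matrix.mul_fin_two, add_comm] using h01

end TwistedDeriv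

theorem _root_.IsTwistedDerivation.polDisc_ext {σ τ : PolDisc q →ₐ[ℂ] PolDisc q}
    {D D' : PolDisc q →ₗ[ℂ] PolDisc q} (hD : IsTwistedDerivation σ τ D)
    (hD' : IsTwistedDerivation σ τ D') (hz : D (zGen q) = D' (zGen q))
    (hw : D (wGen q) = D' (wGen q)) : D = D' := by
  ext f
  induction f using induction_on with
  | algebraMap c => rw [hD.map_algebraMap, hD'.map_algebraMap]
  | zGen => exact hz
  | wGen => exact hw
  | add f g hf hg => rw [map_add, map_add, hf, hg]
  | mul f g hf hg => rw [hD, hD', hf, hg]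

section Uqsl2

variable (hq : q ≠ 0)

def uqK : PolDisc q ≃ₐ[ℂ] PolDisc q :=
  scale ((q : ℂ) ^ 2) (pow_ne_zero 2 (Complex.ofReal_ne_zero.mpr hq))

@[simp] theorem uqK_zGen : uqK hq (zGen q) = ((q : ℂ) ^ 2) • zGen q := scale_zGen _ _
@[simp] theorem uqK_wGen : uqK hq (wGen q) = ((q : ℂ) ^ 2)⁻¹ • wGen q := scale_wGen _ _

@[simp] theorem uqK_symm_zGen : (uqK hq).symm (zGen q) = ((q : ℂ) ^ 2)⁻¹ • zGen q :=
  scale_symm_zGen _ _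

@[simp] theorem uqK_symm_wGen : (uqK hq).symm (wGen q) = ((q : ℂ) ^ 2) • wGen q :=
  scale_symm_wGen _ _

variable {s : ℂ} (hs : s ^ 2 = q)
include hs

theorem uqE_compat :
    uqK hq (wGen q) * ((-s) • (zGen q * zGen q)) + ((s ^ 3)⁻¹ • 1) * AlgHom.id ℂ _ (zGen q) =
      ((q : ℂ) ^ 2) • (uqK hq (zGen q) * ((s ^ 3)⁻¹ • 1) +
        (-s) • (zGen q * zGen q) * AlgHom.id ℂ _ (wGen q)) := by
  have hs0 : s ≠ 0 := ne_zero_pow two_ne_zero (hs ▸ Complex.ofReal_ne_zero.mpr hq)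
  simp only [uqK_zGen, uqK_wGen, AlgHom.coe_id, id_eq, smul_mul_assoc, mul_smul_comm, one_mul,
    mul_one, mul_assoc, mul_add, wGen_mul_zGen_mul, wGen_mul_zGen, smul_add, smul_smul]
  match_scalars
  · simp only [← hs]; field_simp
  · simp only [← hs]; field_simp; ring

theorem uqF_compat :
    AlgHom.id ℂ _ (wGen q) * (s • 1) + ((-(s ^ 5)) • (wGen q * wGen q)) * (uqK hq).symm (zGen q) =
      ((q : ℂ) ^ 2) • (AlgHom.id ℂ _ (zGen q) * ((-(s ^ 5)) • (wGen q * wGen q)) +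
        (s • 1) * (uqK hq).symm (wGen q)) := by
  have hs0 : s ≠ 0 := ne_zero_pow two_ne_zero (hs ▸ Complex.ofReal_ne_zero.mpr hq)
  simp only [uqK_symm_zGen, uqK_symm_wGen, AlgHom.coe_id, id_eq, smul_mul_assoc, mul_smul_comm,
    one_mul, mul_one, mul_assoc, mul_add, wGen_mul_zGen_mul, wGen_mul_zGen, smul_add, smul_smul]
  match_scalars
  · simp only [← hs]; field_simp; ring
  · simp only [← hs]; field_simp

def uqE : PolDisc q →ₗ[ℂ] PolDisc q :=
  twistedDeriv _ _ _ _ (uqE_compat hq hs)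

def uqF : PolDisc q →ₗ[ℂ] PolDisc q :=
  twistedDeriv _ _ _ _ (uqF_compat hq hs)

theorem isTwistedDerivation_uqE : IsTwistedDerivation (uqK hq) (AlgHom.id ℂ _) (uqE hq hs) :=
  isTwistedDerivation_twistedDeriv _ _ _ _ _

theorem isTwistedDerivation_uqF :
    IsTwistedDerivation (AlgHom.id ℂ _) (uqK hq).symm (uqF hq hs) :=
  isTwistedDerivation_twistedDeriv _ _ _ _ _

@[simp] theorem uqE_zGen : uqE hq hs (zGen q) = (-s) • (zGen q * zGen q) := twistedDeriv_zGen ..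
@[simp] theorem uqE_wGen : uqE hq hs (wGen q) = (s ^ 3)⁻¹ • 1 := twistedDeriv_wGen ..
@[simp] theorem uqF_zGen : uqF hq hs (zGen q) = s • 1 := twistedDeriv_zGen ..

@[simp] theorem uqF_wGen : uqF hq hs (wGen q) = (-(s ^ 5)) • (wGen q * wGen q) :=
  twistedDeriv_wGen ..

theorem uqK_uqE_uqK_symm (f : PolDisc q) :
    uqK hq (uqE hq hs ((uqK hq).symm f)) = ((q : ℂ) ^ 2) • uqE hq hs f := by
  have hE := isTwistedDerivation_uqE hq hs
  refine LinearMap.congr_fun ((hE.conj (uqK hq) (by simp) (by simp)).polDisc_ext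
    (hE.smul _) ?_ (by simp [smul_smul])) f
  simp only [LinearMap.comp_apply, AlgEquiv.toLinearMap_apply, LinearMap.smul_apply, map_smul,
    map_mul, uqK_symm_zGen, uqK_zGen, uqE_zGen, smul_mul_smul_comm, smul_smul]
  congr 1
  field_simp

theorem uqK_uqF_uqK_symm (f : PolDisc q) :
    uqK hq (uqF hq hs ((uqK hq).symm f)) = ((q : ℂ) ^ 2)⁻¹ • uqF hq hs f := by
  have hF := isTwistedDerivation_uqF hq hs
  refine LinearMap.congr_fun ((hF.conj (uqK hq) (by simp) (by simp)).polDisc_ext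
    (hF.smul _) (by simp [smul_smul]) ?_) f
  simp only [LinearMap.comp_apply, AlgEquiv.toLinearMap_apply, LinearMap.smul_apply, map_smul,
    map_mul, uqK_symm_wGen, uqK_wGen, uqF_wGen, smul_mul_smul_comm, smul_smul]
  congr 1
  field_simp

theorem uqE_uqF_sub_uqF_uqE (hq1 : q ^ 2 ≠ 1) (f : PolDisc q) :
    uqE hq hs (uqF hq hs f) - uqF hq hs (uqE hq hs f) =
      ((q : ℂ) - (q : ℂ)⁻¹)⁻¹ • (uqK hq f - (uqK hq).symm f) := by
  have hE := isTwistedDerivation_uqE hq hs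
  have hF := isTwistedDerivation_uqF hq hs
  have hq0 : (q : ℂ) ≠ 0 := Complex.ofReal_ne_zero.mpr hq
  have hq1' : (q : ℂ) ^ 2 - 1 ≠ 0 := sub_ne_zero.mpr (by exact_mod_cast hq1)
  have hEF := hE.commutator (pow_ne_zero 2 hq0) hF (uqK_uqE_uqK_symm hq hs)
    (uqK_uqF_uqK_symm hq hs)
  refine LinearMap.congr_fun (hEF.polDisc_ext
    ((AlgHom.isTwistedDerivation_sub _ _).smul ((q : ℂ) - (q : ℂ)⁻¹)⁻¹) ?_ ?_) f
  all_goals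
    simp only [LinearMap.sub_apply, LinearMap.comp_apply, LinearMap.smul_apply,
      AlgHom.toLinearMap_apply, AlgEquiv.coe_toAlgHom, AlgHom.coe_id, id_eq, uqE_zGen, uqE_wGen,
      uqF_zGen, uqF_wGen, uqK_zGen, uqK_wGen, uqK_symm_zGen, uqK_symm_wGen, map_smul,
      hE _ _, hF _ _, hE.map_one_eq_zero, hF.map_one_eq_zero, smul_mul_assoc, mul_smul_comm,
      one_mul, mul_one, smul_zero, smul_smul]
    match_scalars
    field_simp
    rw [hs]
    ring

end Uqsl2

end PolDisc

/-- The quantum disc algebra `Pol(ℂ)_q` is a `U_q(sl₂)`-module algebra: there are an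
algebra automorphism `K` and linear maps `E`, `F` acting by twisted derivations and
satisfying the `U_q(sl₂)` commutation relations, with the prescribed action on the
generators `z`, `w` (here `q^{1/2} = Real.sqrt q`). -/
theorem polDisc_uqsl2_module_algebra (q : ℝ) (hq0 : 0 < q) (hq1 : q < 1) :
    ∃ (K : PolDisc q ≃ₐ[ℂ] PolDisc q) (E F : PolDisc q →ₗ[ℂ] PolDisc q),
      -- (i) action of K on the generators
      (K (zGen q) = ((q : ℂ) ^ 2) • zGen q) ∧
      (K (wGen q) = (((q : ℂ) ^ 2)⁻¹) • wGen q) ∧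
      -- (ii) twisted Leibniz rules
      (∀ f g : PolDisc q, E (f * g) = E f * g + K f * E g) ∧
      (∀ f g : PolDisc q, F (f * g) = F f * K.symm g + f * F g) ∧
      -- (iii) action of E, F on the generators
      (E (zGen q) = (-(Real.sqrt q : ℂ)) • (zGen q * zGen q)) ∧
      (E (wGen q) = (((Real.sqrt q : ℂ) ^ 3)⁻¹) • (1 : PolDisc q)) ∧
      (F (zGen q) = (Real.sqrt q : ℂ) • (1 : PolDisc q)) ∧
      (F (wGen q) = (-((Real.sqrt q : ℂ) ^ 5)) • (wGen q * wGen q)) ∧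
      -- (iv) U_q(sl₂) relations among the operators
      (∀ f : PolDisc q, K (E (K.symm f)) = ((q : ℂ) ^ 2) • E f) ∧
      (∀ f : PolDisc q, K (F (K.symm f)) = (((q : ℂ) ^ 2)⁻¹) • F f) ∧
      (∀ f : PolDisc q, E (F f) - F (E f) =
        (((q : ℂ) - (q : ℂ)⁻¹)⁻¹) • (K f - K.symm f)) := by
  have hq : q ≠ 0 := hq0.ne'
  have hs : (Real.sqrt q : ℂ) ^ 2 = q := by exact_mod_cast Real.sq_sqrt hq0.le
  have hq2 : q ^ 2 ≠ 1 := (pow_lt_one₀ hq0.le hq1 two_ne_zero).ne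
  open PolDisc in
  exact ⟨uqK hq, uqE hq hs, uqF hq hs, uqK_zGen hq, uqK_wGen hq, isTwistedDerivation_uqE hq hs,
      isTwistedDerivation_uqF hq hs, uqE_zGen hq hs, uqE_wGen hq hs, uqF_zGen hq hs, uqF_wGen hq hs,
      uqK_uqE_uqK_symm hq hs, uqK_uqF_uqK_symm hq hs, uqE_uqF_sub_uqF_uqE hq hs hq2⟩
end
end
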